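/- arXiv:2402.19365 — 3 statements merged into one kernel-verified Lean document; each statement's English description precedes it below -/
import Mathlib

section
/- Let C be a finite type, k a non-negative integer, and 𝓕 a finite family of nonempty finite subsets of C, each of cardinality at most 2. Define a simple graph H on the vertex set C ⊕ C (original vertices inl a and dummy vertices inr a) by: inl a is adjacent to inl b if and only if a ≠ b and {a, b} ∈ 𝓕; inl a is adjacent to inr a if and only if the singleton {a} ∈ 𝓕; and there are no other adjacencies. Then there exists W ⊆ C with |W| ≤ k and W ∩ F nonempty for every F ∈ 𝓕 if and only if H has a vertex cover of size at most k. -/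
/-- `S` is a vertex cover of the simple graph `G`: every edge of `G` has at
least one endpoint in `S`. -/
def IsVertexCover {V : Type*} (G : SimpleGraph V) (S : Finset V) : Prop :=
  ∀ e ∈ G.edgeSet, ∃ v ∈ S, v ∈ e

/-- The reduction graph `H` on vertex set `C ⊕ C` associated with a family `𝓕`
of subsets of `C` of size at most two: `inl a` is adjacent to `inl b` iff
`a ≠ b` and `{a, b} ∈ 𝓕`; `inl a` is adjacent to the dummy vertex `inr a` iff
the singleton `{a} ∈ 𝓕`; and there are no other adjacencies. -/
def direGraph {C : Type*} [DecidableEq C] (𝓕 : Finset (Finset C)) :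
    SimpleGraph (C ⊕ C) where
  Adj x y :=
    match x, y with
    | Sum.inl a, Sum.inl b => a ≠ b ∧ {a, b} ∈ 𝓕
    | Sum.inl a, Sum.inr b => a = b ∧ {a} ∈ 𝓕
    | Sum.inr a, Sum.inl b => a = b ∧ {b} ∈ 𝓕
    | Sum.inr _, Sum.inr _ => False
  symm := by
    constructor
    rintro (a | a) (b | b) h
    · obtain ⟨h1, h2⟩ := h
      exact ⟨h1.symm, by rwa [Finset.pair_comm] at h2⟩
    · obtain ⟨h1, h2⟩ := h
      exact ⟨h1.symm, h2⟩
    · obtain ⟨h1, h2⟩ := h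
      subst h1
      exact ⟨rfl, h2⟩
    · exact h
  loopless := by
    constructor
    rintro (a | a) h
    · exact h.1 rfl
    · exact h

/-! Let `π = Sum.elim id id : C ⊕ C → C` forget which copy a vertex lives in. Every edge of
`direGraph 𝓕` projects under `π` onto a member of `𝓕`, and every `F = {a, b} ∈ 𝓕` (with `a = b`
allowed) is such a projection. So `π` maps vertex covers to hitting sets, and a hitting set `W`
lifts to the cover `inl '' W`: the dummy vertex `inr a` is only adjacent to `inl a`. -/

theorem Finset.exists_eq_pair_of_nonempty_of_card_le_two {α : Type*} [DecidableEq α]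
    {s : Finset α} (hne : s.Nonempty) (hcard : s.card ≤ 2) : ∃ a b, s = {a, b} := by
  obtain h | h : s.card = 1 ∨ s.card = 2 := by
    have := hne.card_pos
    omega
  · obtain ⟨a, rfl⟩ := Finset.card_eq_one.1 h
    exact ⟨a, a, by simp⟩
  · obtain ⟨a, b, -, rfl⟩ := Finset.card_eq_two.1 h
    exact ⟨a, b, rfl⟩

namespace direGraph

variable {C : Type*} [DecidableEq C] {𝓕 : Finset (Finset C)}

theorem pair_mem_of_adj {x y : C ⊕ C} (h : (direGraph 𝓕).Adj x y) :
    ({Sum.elim id id x, Sum.elim id id y} : Finset C) ∈ 𝓕 := by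
  rcases x with a | a <;> rcases y with b | b
  · exact h.2
  · obtain ⟨rfl, hF⟩ := h
    simpa using hF
  · obtain ⟨rfl, hF⟩ := h
    simpa using hF
  · exact h.elim

theorem inl_eq_of_adj {x y : C ⊕ C} (h : (direGraph 𝓕).Adj x y) {c : C}
    (hc : c = Sum.elim id id x ∨ c = Sum.elim id id y) :
    Sum.inl c = x ∨ Sum.inl c = y := by
  rcases x with a | a <;> rcases y with b | b
  · simpa using hc
  · obtain ⟨rfl, -⟩ := h
    simp_all
  · obtain ⟨rfl, -⟩ := h
    simp_all
  · exact h.elim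

theorem exists_adj_of_mem {a b : C} (hF : {a, b} ∈ 𝓕) :
    ∃ x y, (direGraph 𝓕).Adj x y ∧ Sum.elim id id x = a ∧ Sum.elim id id y = b := by
  by_cases hab : a = b
  · subst hab
    exact ⟨.inl a, .inr a, ⟨rfl, by simpa using hF⟩, rfl, rfl⟩
  · exact ⟨.inl a, .inl b, ⟨hab, hF⟩, rfl, rfl⟩

theorem isVertexCover_image_inl {W : Finset C} (hW : ∀ F ∈ 𝓕, (W ∩ F).Nonempty) :
    IsVertexCover (direGraph 𝓕) (W.image Sum.inl) := by
  rintro ⟨x, y⟩ hxy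
  obtain ⟨c, hc⟩ := hW _ (pair_mem_of_adj hxy)
  obtain ⟨hcW, hc⟩ := Finset.mem_inter.1 hc
  refine ⟨.inl c, Finset.mem_image_of_mem _ hcW, ?_⟩
  rcases inl_eq_of_adj hxy (by simpa using hc) with h | h <;> simp [h]

theorem image_inter_pair_nonempty {S : Finset (C ⊕ C)} (hS : IsVertexCover (direGraph 𝓕) S)
    {a b : C} (hF : {a, b} ∈ 𝓕) : (S.image (Sum.elim id id) ∩ {a, b}).Nonempty := by
  obtain ⟨x, y, hxy, rfl, rfl⟩ := exists_adj_of_mem hF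
  obtain ⟨v, hvS, hv⟩ := hS s(x, y) hxy
  refine ⟨Sum.elim id id v, Finset.mem_inter.2 ⟨Finset.mem_image_of_mem _ hvS, ?_⟩⟩
  rcases Sym2.mem_iff.1 hv with rfl | rfl <;> simp

end direGraph

theorem committee_iff_vertexCover_general
    {C : Type*} [DecidableEq C]
    (𝓕 : Finset (Finset C)) (h𝓕 : ∀ F ∈ 𝓕, F.Nonempty ∧ F.card ≤ 2) (k : ℕ) :
    (∃ W : Finset C, W.card ≤ k ∧ ∀ F ∈ 𝓕, (W ∩ F).Nonempty) ↔
    (∃ S : Finset (C ⊕ C), IsVertexCover (direGraph 𝓕) S ∧ S.card ≤ k) := by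
  constructor
  · rintro ⟨W, hWk, hW⟩
    exact ⟨W.image Sum.inl, direGraph.isVertexCover_image_inl hW,
      Finset.card_image_le.trans hWk⟩
  · rintro ⟨S, hS, hSk⟩
    refine ⟨S.image (Sum.elim id id), Finset.card_image_le.trans hSk, fun F hF => ?_⟩
    obtain ⟨a, b, rfl⟩ :=
      Finset.exists_eq_pair_of_nonempty_of_card_le_two (h𝓕 F hF).1 (h𝓕 F hF).2
    exact direGraph.image_inter_pair_nonempty hS hF

/-- Correctness of the reduction from the DiRe committee feasibility problem to
vertex cover: for a family `𝓕` of nonempty subsets of `C`, each of cardinality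
at most two, there is a committee (hitting set) `W ⊆ C` with `|W| ≤ k` meeting
every member of `𝓕` if and only if the reduction graph `H` has a vertex cover
of size at most `k`. -/
theorem committee_iff_vertexCover
    {C : Type*} [Fintype C] [DecidableEq C]
    (𝓕 : Finset (Finset C)) (h𝓕 : ∀ F ∈ 𝓕, F.Nonempty ∧ F.card ≤ 2) (k : ℕ) :
    (∃ W : Finset C, W.card ≤ k ∧ ∀ F ∈ 𝓕, (W ∩ F).Nonempty) ↔
    (∃ S : Finset (C ⊕ C), IsVertexCover (direGraph 𝓕) S ∧ S.card ≤ k) :=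
  committee_iff_vertexCover_general 𝓕 h𝓕 k
end

section
/- Let G be a finite simple graph on vertex set V and k a non-negative integer. Define a simple graph G' on the vertex set V ⊕ Unit by: inl a is adjacent to inl b if and only if a and b are adjacent in G, and the dummy vertex inr () is adjacent to inl v for every v ∈ V. Then G has a vertex cover of size at most k if and only if G' has a vertex cover of size at most k + 1. -/
/-- The graph obtained from `G` by adding a universal dummy vertex `inr ()`:
`inl a` and `inl b` are adjacent iff `a` and `b` are adjacent in `G`, and the
dummy vertex `inr ()` is adjacent to `inl v` for every vertex `v`. -/
def addUniversal {V : Type*} (G : SimpleGraph V) : SimpleGraph (V ⊕ Unit) where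
  Adj x y :=
    match x, y with
    | Sum.inl a, Sum.inl b => G.Adj a b
    | Sum.inl _, Sum.inr _ => True
    | Sum.inr _, Sum.inl _ => True
    | Sum.inr _, Sum.inr _ => False
  symm := by
    constructor
    rintro (a | a) (b | b) h
    · exact SimpleGraph.Adj.symm h
    · exact h
    · exact h
    · exact h
  loopless := by
    constructor
    rintro (a | a) h
    · exact G.irrefl h
    · exact h

/-!
A cover `S` of `G` extends to the cover `S ∪ {dummy}` of `G'`. Conversely, the `V`-part of a
cover `S'` of `G'` covers `G`, and it is smaller than `S'` when `S'` contains the dummy vertex.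
Otherwise the edges at the dummy vertex force `S'` to contain all of `V`, so `|V| ≤ k + 1`, and
then `V` minus any single vertex is a cover of `G` of size at most `k`.
-/

open Finset

section

variable {V : Type*} {G : SimpleGraph V}

theorem isVertexCover_iff_coe {S : Finset V} :
    IsVertexCover G S ↔ G.IsVertexCover (S : Set V) := by
  simp only [IsVertexCover, SimpleGraph.IsVertexCover, Sym2.forall, SimpleGraph.mem_edgeSet,
    Sym2.mem_iff, mem_coe, and_or_left, exists_or, exists_eq_right]

theorem exists_isVertexCover_card_le_card_sub_one [Fintype V] [DecidableEq V]
    (G : SimpleGraph V) : ∃ S : Finset V, IsVertexCover G S ∧ #S ≤ Fintype.card V - 1 := by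
  cases isEmpty_or_nonempty V with
  | inl _ => exact ⟨∅, fun e _ => isEmptyElim e.out.1, by simp⟩
  | inr h =>
    obtain ⟨v⟩ := h
    refine ⟨{v}ᶜ, ?_, by simp [card_compl]⟩
    rw [isVertexCover_iff_coe, coe_compl, coe_singleton, SimpleGraph.isVertexCover_compl]
    exact Set.pairwise_singleton _ _

theorem IsVertexCover.addUniversal_insert_inr [DecidableEq V] {S : Finset V}
    (hS : IsVertexCover G S) :
    IsVertexCover (addUniversal G) (insert (Sum.inr ()) (S.map .inl)) := by
  rw [isVertexCover_iff_coe] at hS ⊢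
  rintro (a | ⟨⟩) (b | ⟨⟩) hab
  · simpa using hS hab
  all_goals simp

theorem IsVertexCover.toLeft {S : Finset (V ⊕ Unit)} (hS : IsVertexCover (addUniversal G) S) :
    IsVertexCover G S.toLeft := by
  rw [isVertexCover_iff_coe] at hS ⊢
  intro a b hab
  simpa using hS (show (addUniversal G).Adj (.inl a) (.inl b) from hab)

theorem IsVertexCover.toLeft_eq_univ [Fintype V] {S : Finset (V ⊕ Unit)}
    (hS : IsVertexCover (addUniversal G) S) (hdummy : Sum.inr () ∉ S) : S.toLeft = univ := by
  refine eq_univ_of_forall fun v => mem_toLeft.2 ?_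
  have hadj : (addUniversal G).Adj (.inr ()) (.inl v) := trivial
  exact (isVertexCover_iff_coe.1 hS hadj).resolve_left hdummy

end

/-- A finite simple graph `G` has a vertex cover of size at most `k` if and
only if the graph `G'` obtained from `G` by adding a universal dummy vertex
has a vertex cover of size at most `k + 1`. -/
theorem addUniversal_vertexCover_iff
    {V : Type*} [Fintype V] [DecidableEq V] (G : SimpleGraph V) (k : ℕ) :
    (∃ S : Finset V, IsVertexCover G S ∧ S.card ≤ k) ↔
    (∃ S' : Finset (V ⊕ Unit), IsVertexCover (addUniversal G) S' ∧ S'.card ≤ k + 1) := by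
  constructor
  · rintro ⟨S, hS, hk⟩
    refine ⟨_, hS.addUniversal_insert_inr, (card_insert_le _ _).trans ?_⟩
    rw [card_map]
    omega
  · rintro ⟨S', hS', hk⟩
    have hsplit := card_toLeft_add_card_toRight (u := S')
    by_cases hdummy : Sum.inr () ∈ S'
    · have : 1 ≤ #S'.toRight := card_pos.2 ⟨(), mem_toRight.2 hdummy⟩
      exact ⟨S'.toLeft, hS'.toLeft, by omega⟩
    · obtain ⟨S, hS, hS_card⟩ := exists_isVertexCover_card_le_card_sub_one G
      have : #S'.toLeft = Fintype.card V := by rw [hS'.toLeft_eq_univ hdummy, card_univ]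
      exact ⟨S, hS, by omega⟩
end

section
/- Let V be a finite type, let r be a symmetric relation on V (loops r(a,a) allowed), and let k be a non-negative integer. Define a simple graph G' on the vertex set (V ⊕ V) ⊕ Unit by: inl (inl a) is adjacent to inl (inl b) if and only if a ≠ b and r(a,b); inl (inl a) is adjacent to inl (inr a) if and only if r(a,a); and inr () is adjacent to every other vertex of G'. Then there exists a set S ⊆ V with |S| ≤ k such that for all a, b ∈ V with r(a,b), a ∈ S or b ∈ S, if and only if G' has a vertex cover of size at most k + 1. -/
/-- The simple connected graph `G'` on vertex set `(V ⊕ V) ⊕ Unit` associated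
with a symmetric relation `r` on `V` (loops allowed): `inl (inl a)` is adjacent
to `inl (inl b)` iff `a ≠ b` and `r a b`; `inl (inl a)` is adjacent to the
dummy vertex `inl (inr a)` iff `r a a` (a pendant edge replacing the loop at
`a`); and the universal dummy vertex `inr ()` is adjacent to every other
vertex. -/
def loopReductionGraph {V : Type*} (r : V → V → Prop) (hr : Symmetric r) :
    SimpleGraph ((V ⊕ V) ⊕ Unit) where
  Adj x y :=
    match x, y with
    | Sum.inl (Sum.inl a), Sum.inl (Sum.inl b) => a ≠ b ∧ r a b
    | Sum.inl (Sum.inl a), Sum.inl (Sum.inr b) => a = b ∧ r a a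
    | Sum.inl (Sum.inr a), Sum.inl (Sum.inl b) => a = b ∧ r b b
    | Sum.inl (Sum.inr _), Sum.inl (Sum.inr _) => False
    | Sum.inl _, Sum.inr _ => True
    | Sum.inr _, Sum.inl _ => True
    | Sum.inr _, Sum.inr _ => False
  symm := by
    constructor
    rintro ((a | a) | u) ((b | b) | u') h
    · obtain ⟨h1, h2⟩ := h
      exact ⟨h1.symm, hr h2⟩
    · obtain ⟨h1, h2⟩ := h
      exact ⟨h1.symm, h2⟩
    · exact trivial
    · obtain ⟨h1, h2⟩ := h
      exact ⟨h1.symm, h2⟩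
    · exact h
    · exact trivial
    · exact trivial
    · exact trivial
    · exact h
  loopless := by
    constructor
    rintro ((a | a) | u) h
    · exact h.1 rfl
    · exact h
    · exact h

/-!
A cover `S` of `r` lifts to `S` plus the universal vertex. Conversely, a cover `S'` of the
graph projects to the set of those `a` whose copy `inl (inl a)` or pendant `inl (inr a)` lies in
`S'`. If `S'` contains the universal vertex, the projection loses at least that element; if not,
`S'` must contain all `2 |V|` other vertices, so `|V| ≤ k` and any subset of `V` is small enough.
-/

open Finset

theorem isVertexCover_iff {V : Type*} {G : SimpleGraph V} {S : Finset V} :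
    IsVertexCover G S ↔ ∀ x y, G.Adj x y → x ∈ S ∨ y ∈ S := by
  refine ⟨fun h x y hxy => ?_, fun h e he => ?_⟩
  · obtain ⟨v, hv, hve⟩ := h s(x, y) hxy
    rcases Sym2.mem_iff.1 hve with rfl | rfl
    exacts [.inl hv, .inr hv]
  · induction e using Sym2.ind with
    | _ x y =>
      rcases h x y he with hx | hy
      exacts [⟨x, hx, Sym2.mem_mk_left x y⟩, ⟨y, hy, Sym2.mem_mk_right x y⟩]

section loopReductionGraph

variable {V : Type*} {r : V → V → Prop} {hr : Symmetric r}

theorem loopReductionGraph_adj_inl_inr (v : V ⊕ V) :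
    (loopReductionGraph r hr).Adj (.inl v) (.inr ()) := by
  cases v <;> trivial

def liftCover (S : Finset V) : Finset ((V ⊕ V) ⊕ Unit) :=
  cons (.inr ()) (S.map (Function.Embedding.inl.trans .inl)) (by simp)

theorem card_liftCover (S : Finset V) : #(liftCover S) = #S + 1 := by
  simp [liftCover]

theorem isVertexCover_liftCover {S : Finset V} (hS : ∀ a b, r a b → a ∈ S ∨ b ∈ S) :
    IsVertexCover (loopReductionGraph r hr) (liftCover S) := by
  rw [isVertexCover_iff]
  rintro ((a | a) | ⟨⟩) ((b | b) | ⟨⟩) hab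
  · simpa [liftCover] using hS a b hab.2
  · obtain ⟨rfl, haa⟩ := hab
    simpa [liftCover] using hS a a haa
  · simp [liftCover]
  · obtain ⟨rfl, hbb⟩ := hab
    simpa [liftCover] using hS a a hbb
  · exact hab.elim
  · simp [liftCover]
  · simp [liftCover]
  · simp [liftCover]
  · exact hab.elim

def projCover [DecidableEq V] (S' : Finset ((V ⊕ V) ⊕ Unit)) : Finset V :=
  S'.toLeft.image (Sum.elim id id)

variable [DecidableEq V] {S' : Finset ((V ⊕ V) ⊕ Unit)}

theorem mem_projCover {a : V} :
    a ∈ projCover S' ↔ .inl (.inl a) ∈ S' ∨ .inl (.inr a) ∈ S' := by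
  simp [projCover]

theorem covers_projCover (h : IsVertexCover (loopReductionGraph r hr) S') (a b : V) (hab : r a b) :
    a ∈ projCover S' ∨ b ∈ projCover S' := by
  simp only [mem_projCover]
  obtain rfl | hne := eq_or_ne a b
  · exact .inl <| isVertexCover_iff.1 h (.inl (.inl a)) (.inl (.inr a)) ⟨rfl, hab⟩
  · rcases isVertexCover_iff.1 h (.inl (.inl a)) (.inl (.inl b)) ⟨hne, hab⟩ with ha | hb
    exacts [.inl (.inl ha), .inr (.inl hb)]

theorem card_projCover_le [Fintype V] {k : ℕ} (h : IsVertexCover (loopReductionGraph r hr) S')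
    (hk : #S' ≤ k + 1) : #(projCover S') ≤ k := by
  have hproj : #(projCover S') ≤ #S'.toLeft := card_image_le
  have hsplit : #S'.toLeft + #S'.toRight = #S' := card_toLeft_add_card_toRight
  by_cases hinr : .inr () ∈ S'
  · have : 0 < #S'.toRight := card_pos.2 ⟨(), mem_toRight.2 hinr⟩
    omega
  · -- every vertex other than `inr ()` is adjacent to it, so `2 * |V| ≤ #S' ≤ k + 1`
    have huniv : (univ : Finset (V ⊕ V)) ⊆ S'.toLeft := fun v _ => mem_toLeft.2 <|
      (isVertexCover_iff.1 h _ _ (loopReductionGraph_adj_inl_inr v)).resolve_right hinr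
    have h2V := card_le_card huniv
    rw [card_univ, Fintype.card_sum] at h2V
    have := card_le_univ (projCover S')
    omega

end loopReductionGraph

/-- Correctness of the reduction from vertex cover on an unweighted undirected
graph possibly with loops (modeled by a symmetric relation `r` on `V`) to
vertex cover on the unweighted simple connected graph `G'`: there is a set
`S ⊆ V` with `|S| ≤ k` covering every related pair of `r` if and only if `G'`
has a vertex cover of size at most `k + 1`. -/
theorem relCover_iff_vertexCover
    {V : Type*} [Fintype V] [DecidableEq V]
    (r : V → V → Prop) (hr : Symmetric r) (k : ℕ) :
    (∃ S : Finset V, S.card ≤ k ∧ ∀ a b : V, r a b → a ∈ S ∨ b ∈ S) ↔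
    (∃ S' : Finset ((V ⊕ V) ⊕ Unit),
        IsVertexCover (loopReductionGraph r hr) S' ∧ S'.card ≤ k + 1) := by
  constructor
  · rintro ⟨S, hcard, hS⟩
    exact ⟨liftCover S, isVertexCover_liftCover hS, by rw [card_liftCover]; omega⟩
  · rintro ⟨S', hS', hcard⟩
    exact ⟨projCover S', card_projCover_le hS' hcard, covers_projCover hS'⟩
end
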